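/- arXiv:0712.3458 — 5 statements merged into one kernel-verified Lean document; each statement's English description precedes it below -/
import Mathlib

section
/- Let f : [0,∞) → [1,∞) be non-decreasing with f(x) → ∞ as x → ∞. Define g(x) = x · inf_{y ∈ [0,x]} (f(y)/y) (with f(y)/y interpreted as +∞ at y = 0). Then g(x) ≤ f(x) for all x > 0, the map x ↦ x·g(1/x) is non-decreasing on (0,∞), and g(x) → ∞ as x → ∞. -/
open Filter Set

section SlopeInf

variable {f : ℝ → ℝ}

lemma bddBelow_image_div_Ioc (hf : ∀ y, 0 < y → 0 ≤ f y) (x : ℝ) :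
    BddBelow ((fun y => f y / y) '' Ioc 0 x) := by
  refine ⟨0, ?_⟩
  rintro _ ⟨y, hy, rfl⟩
  exact div_nonneg (hf y hy.1) hy.1.le

lemma mul_sInf_image_div_Ioc_le (hf : ∀ y, 0 < y → 0 ≤ f y) {x : ℝ} (hx : 0 < x) :
    x * sInf ((fun y => f y / y) '' Ioc 0 x) ≤ f x :=
  calc x * sInf ((fun y => f y / y) '' Ioc 0 x) ≤ x * (f x / x) :=
        mul_le_mul_of_nonneg_left
          (csInf_le (bddBelow_image_div_Ioc hf x) ⟨x, ⟨hx, le_rfl⟩, rfl⟩) hx.le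
    _ = f x := by field_simp

lemma antitoneOn_sInf_image_div_Ioc (hf : ∀ y, 0 < y → 0 ≤ f y) :
    AntitoneOn (fun x => sInf ((fun y => f y / y) '' Ioc 0 x)) (Ioi 0) :=
  fun a ha _ _ hab => csInf_le_csInf (bddBelow_image_div_Ioc hf _)
    ⟨f a / a, a, ⟨ha, le_rfl⟩, rfl⟩ (image_mono (Ioc_subset_Ioc_right hab))

/-- Small `y` are handled by `f y ≥ 1`, large `y` by `f y ≥ M`. -/
lemma le_mul_sInf_image_div_Ioc (hf1 : ∀ y, 0 < y → 1 ≤ f y) {x M : ℝ} (hx : 0 < x)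
    (hM : 0 < M) (hfM : ∀ y, x / M ≤ y → y ≤ x → M ≤ f y) :
    M ≤ x * sInf ((fun y => f y / y) '' Ioc 0 x) := by
  have hlow : M / x ≤ sInf ((fun y => f y / y) '' Ioc 0 x) := by
    refine le_csInf ⟨f x / x, x, ⟨hx, le_rfl⟩, rfl⟩ ?_
    rintro _ ⟨y, ⟨hy0, hyx⟩, rfl⟩
    rcases le_or_gt y (x / M) with hsmall | hlarge
    · calc M / x ≤ 1 / y := by
            rw [div_le_div_iff₀ hx hy0]
            linarith [(le_div_iff₀ hM).mp hsmall]
        _ ≤ f y / y := by gcongr; exact hf1 y hy0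
    · calc M / x ≤ M / y := by gcongr
        _ ≤ f y / y := by gcongr; exact hfM y hlarge.le hyx
  calc M = x * (M / x) := by field_simp
    _ ≤ _ := mul_le_mul_of_nonneg_left hlow hx.le

lemma tendsto_mul_sInf_image_div_Ioc (hf1 : ∀ y, 0 < y → 1 ≤ f y)
    (hftop : Tendsto f atTop atTop) :
    Tendsto (fun x => x * sInf ((fun y => f y / y) '' Ioc 0 x)) atTop atTop := by
  refine tendsto_atTop.mpr fun M => ?_
  set M' := max M 1
  have hM' : 0 < M' := lt_of_lt_of_le one_pos (le_max_right _ _)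
  obtain ⟨N, hN⟩ := eventually_atTop.mp (hftop.eventually (eventually_ge_atTop M'))
  filter_upwards [eventually_ge_atTop (max (M' * N) 1)] with x hx
  have hx0 : 0 < x := lt_of_lt_of_le one_pos (le_of_max_le_right hx)
  have hNx : N ≤ x / M' := (le_div_iff₀' hM').mpr (le_of_max_le_left hx)
  exact (le_max_left M 1).trans
    (le_mul_sInf_image_div_Ioc hf1 hx0 hM' fun y hy _ => hN y (hNx.trans hy))

end SlopeInf

theorem stmt2_general (f g : ℝ → ℝ)
    (hf1 : ∀ x, 0 ≤ x → 1 ≤ f x)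
    (hftop : Tendsto f atTop atTop)
    (hg : ∀ x : ℝ, g x = x * sInf ((fun y => f y / y) '' Set.Ioc 0 x)) :
    (∀ x : ℝ, 0 < x → g x ≤ f x) ∧
    (∀ x y : ℝ, 0 < x → x ≤ y → x * g (1/x) ≤ y * g (1/y)) ∧
    Tendsto g atTop atTop := by
  have hf1' : ∀ y, 0 < y → 1 ≤ f y := fun y hy => hf1 y hy.le
  have hf0 : ∀ y, 0 < y → 0 ≤ f y := fun y hy => zero_le_one.trans (hf1' y hy)
  have hg_eq : g = fun x => x * sInf ((fun y => f y / y) '' Ioc 0 x) := funext hg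
  refine ⟨fun x hx => hg x ▸ mul_sInf_image_div_Ioc_le hf0 hx, fun x y hx hxy => ?_,
    hg_eq ▸ tendsto_mul_sInf_image_div_Ioc hf1' hftop⟩
  have hy : 0 < y := hx.trans_le hxy
  rw [hg, hg, ← mul_assoc, ← mul_assoc, mul_one_div_cancel hx.ne', mul_one_div_cancel hy.ne',
    one_mul, one_mul]
  exact antitoneOn_sInf_image_div_Ioc hf0 (one_div_pos.mpr hy) (one_div_pos.mpr hx)
    (one_div_le_one_div_of_le hx hxy)

/-- If `f : [0,∞) → [1,∞)` is nondecreasing with `f → ∞`, and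
`g x = x · inf_{y ∈ (0,x]} f(y)/y` (the value at `y = 0` being `+∞`), then
`g ≤ f` on `(0,∞)`, `x ↦ x g(1/x)` is nondecreasing on `(0,∞)`, and `g → ∞`. -/
theorem stmt2 (f g : ℝ → ℝ)
    (hf1 : ∀ x, 0 ≤ x → 1 ≤ f x)
    (hmono : MonotoneOn f (Set.Ici 0))
    (hftop : Tendsto f atTop atTop)
    (hg : ∀ x : ℝ, g x = x * sInf ((fun y => f y / y) '' Set.Ioc 0 x)) :
    (∀ x : ℝ, 0 < x → g x ≤ f x) ∧
    (∀ x y : ℝ, 0 < x → x ≤ y → x * g (1/x) ≤ y * g (1/y)) ∧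
    Tendsto g atTop atTop :=
  stmt2_general f g hf1 hftop hg
end

section
/- Fix θ₀ ∈ (0, π/2), γ ∈ (−2, −1), and ε > 0. For r = 1 and θ with |θ| ∈ [θ₀, π/2], setting r'(1,θ,α)² − 1 = −sin θ sin α, one has: for all α ∈ (0, π/2), |r'(1,θ,α)² − 1| ≥ (sin θ₀) α/2, and hence ∫₀^{π/2} 1_{α > 2ε/sin θ₀} · (2 − 2cos α)^{γ/2} dα ≥ c₀ ε^{γ+1} for some constant c₀ > 0 depending only on θ₀ and γ, provided ε < (sin θ₀)π/8. -/
open Real MeasureTheory Set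

/-- Gain term lower bound at `r = 1`: for `|θ| ∈ [θ₀, π/2]` and `α ∈ (0, π/2)`,
`|sin θ sin α| ≥ (sin θ₀) α / 2`, and
`∫₀^{π/2} 1_{α > 2ε/sin θ₀} (2-2cos α)^{γ/2} dα ≥ c₀ ε^{γ+1}` for `ε < (sin θ₀)π/8`. -/
theorem stmt9 (θ₀ γ : ℝ) (hθ₀ : θ₀ ∈ Set.Ioo 0 (Real.pi/2))
    (hγ : γ ∈ Set.Ioo (-2 : ℝ) (-1)) :
    (∀ θ : ℝ, θ₀ ≤ |θ| → |θ| ≤ Real.pi/2 → ∀ α ∈ Set.Ioo 0 (Real.pi/2),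
      Real.sin θ₀ * α / 2 ≤ |Real.sin θ * Real.sin α|) ∧
    ∃ c₀ > 0, ∀ ε : ℝ, 0 < ε → ε < Real.sin θ₀ * Real.pi / 8 →
      c₀ * ε ^ (γ + 1) ≤
        ∫ α in (0:ℝ)..(Real.pi/2),
          Set.indicator (Set.Ioi (2*ε / Real.sin θ₀))
            (fun a => (2 - 2*Real.cos a) ^ (γ/2)) α := by
  obtain ⟨hθ₀pos, hθ₀lt⟩ := hθ₀
  obtain ⟨hγ1, hγ2⟩ := hγ
  have hπ := Real.pi_pos
  have hs : 0 < Real.sin θ₀ :=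
    Real.sin_pos_of_pos_of_lt_pi hθ₀pos (by linarith)
  constructor
  · intro θ h1 h2 α hα
    obtain ⟨hα0, hα2⟩ := hα
    have hsinabs : |Real.sin θ| = Real.sin |θ| := by
      rcases le_or_gt 0 θ with h | h
      · rw [abs_of_nonneg h]
        exact abs_of_nonneg (Real.sin_nonneg_of_nonneg_of_le_pi h
          (by rw [abs_of_nonneg h] at h2; linarith))
      · rw [abs_of_neg h, Real.sin_neg]
        have hθge : -(Real.pi/2) ≤ θ := by
          rw [abs_of_neg h] at h2; linarith
        have : Real.sin θ ≤ 0 := by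
          have := Real.sin_nonneg_of_nonneg_of_le_pi (x := -θ) (by linarith)
            (by linarith)
          rw [Real.sin_neg] at this; linarith
        rw [abs_of_nonpos this]
    have hmono : Real.sin θ₀ ≤ Real.sin |θ| :=
      Real.sin_le_sin_of_le_of_le_pi_div_two (by linarith) h2 h1
    have hsinα : α / 2 ≤ Real.sin α := by
      have h4 := Real.pi_le_four
      have := Real.mul_le_sin hα0.le hα2.le
      have h1 : α / 2 ≤ 2 / Real.pi * α := by
        rw [div_mul_eq_mul_div, div_le_div_iff₀ two_pos hπ]
        nlinarith
      linarith
    rw [abs_mul, hsinabs]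
    have : Real.sin θ₀ * α / 2 = Real.sin θ₀ * (α / 2) := by ring
    rw [this, abs_of_nonneg (Real.sin_nonneg_of_nonneg_of_le_pi hα0.le
      (by linarith))]
    exact mul_le_mul hmono hsinα (by linarith) (by linarith)
  · set s := Real.sin θ₀ with hsdef
    set p := γ + 1 with hpdef
    have hp : p < 0 := by simp [hpdef]; linarith
    have hp' : p ≠ 0 := ne_of_lt hp
    have h2p : (2:ℝ) ^ p < 1 := Real.rpow_lt_one_of_one_lt_of_neg one_lt_two hp
    have h2ppos : (0:ℝ) < 2 ^ p := Real.rpow_pos_of_pos two_pos p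
    have hC2 : (0:ℝ) < (2/s) ^ p := Real.rpow_pos_of_pos (by positivity) p
    refine ⟨(1 - (2:ℝ)^p) / (-p) * (2/s)^p,
      mul_pos (div_pos (by linarith) (by linarith)) hC2, ?_⟩
    intro ε hε hε'
    set m := 2 * ε / s with hmdef
    have hm0 : 0 < m := by positivity
    have hm2 : 2 * m ≤ Real.pi / 2 := by
      have h4 : m < Real.pi / 4 :=
        (div_lt_iff₀ hs).mpr (by nlinarith : 2 * ε < Real.pi / 4 * s)
      linarith
    have hmπ : m < Real.pi / 2 := by linarith
    -- rewrite the integral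
    have hint : (∫ α in (0:ℝ)..(Real.pi/2),
          Set.indicator (Set.Ioi m) (fun a => (2 - 2*Real.cos a) ^ (γ/2)) α)
        = ∫ α in m..(Real.pi/2), (2 - 2*Real.cos α) ^ (γ/2) := by
      rw [intervalIntegral.integral_of_le (by linarith : (0:ℝ) ≤ Real.pi/2),
        intervalIntegral.integral_of_le hmπ.le,
        MeasureTheory.setIntegral_indicator measurableSet_Ioi,
        Set.Ioc_inter_Ioi, max_eq_right hm0.le]
    rw [hint]
    -- integrability
    have hint1 : IntervalIntegrable (fun a : ℝ => a ^ γ) volume m (Real.pi/2) := by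
      apply ContinuousOn.intervalIntegrable
      intro x hx
      rw [Set.uIcc_of_le hmπ.le] at hx
      exact (Real.continuousAt_rpow_const x γ
        (Or.inl (ne_of_gt (lt_of_lt_of_le hm0 hx.1)))).continuousWithinAt
    have hint2 : IntervalIntegrable (fun a : ℝ => (2 - 2*Real.cos a) ^ (γ/2))
        volume m (Real.pi/2) := by
      apply ContinuousOn.intervalIntegrable
      intro x hx
      rw [Set.uIcc_of_le hmπ.le] at hx
      have hcos : Real.cos x < 1 := by
        have := Real.cos_lt_cos_of_nonneg_of_le_pi (le_refl 0)
          (by linarith [hx.2] : x ≤ Real.pi) (lt_of_lt_of_le hm0 hx.1)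
        rwa [Real.cos_zero] at this
      exact (ContinuousAt.rpow_const
        ((continuous_const.sub (continuous_const.mul Real.continuous_cos)).continuousAt)
        (Or.inl (ne_of_gt (by nlinarith : (0:ℝ) < 2 - 2*Real.cos x)))).continuousWithinAt
    -- pointwise bound
    have hpt : ∀ x ∈ Set.Icc m (Real.pi/2),
        x ^ γ ≤ (2 - 2*Real.cos x) ^ (γ/2) := by
      intro x hx
      have hx0 : 0 < x := lt_of_lt_of_le hm0 hx.1
      have hcos : Real.cos x < 1 := by
        have := Real.cos_lt_cos_of_nonneg_of_le_pi (le_refl 0)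
          (by linarith [hx.2] : x ≤ Real.pi) hx0
        rwa [Real.cos_zero] at this
      have h1 : (0:ℝ) < 2 - 2*Real.cos x := by linarith
      have h2 : 2 - 2*Real.cos x ≤ x ^ (2:ℝ) := by
        rw [Real.rpow_two]
        nlinarith [Real.one_sub_sq_div_two_le_cos (x := x)]
      have h3 := Real.rpow_le_rpow_of_nonpos h1 h2 (by linarith : γ/2 ≤ 0)
      calc x ^ γ = (x ^ (2:ℝ)) ^ (γ/2) := by
            rw [← Real.rpow_mul hx0.le]; congr 1; ring
        _ ≤ _ := h3
    have hmono := intervalIntegral.integral_mono_on hmπ.le hint1 hint2 hpt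
    have hval : (∫ α in m..(Real.pi/2), α ^ γ)
        = ((Real.pi/2) ^ (γ+1) - m ^ (γ+1)) / (γ+1) := by
      apply integral_rpow
      refine Or.inr ⟨by linarith, ?_⟩
      rw [Set.uIcc_of_le hmπ.le]
      intro h
      exact absurd h.1 (not_le.2 hm0)
    rw [hval] at hmono
    refine le_trans ?_ hmono
    -- final arithmetic
    have hεp : (0:ℝ) < ε ^ p := Real.rpow_pos_of_pos hε p
    have hA : m ^ p = (2/s) ^ p * ε ^ p := by
      rw [hmdef, show 2 * ε / s = (2/s) * ε by ring,
        Real.mul_rpow (by positivity) hε.le]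
    have hB : (Real.pi/2) ^ p ≤ (2:ℝ)^p * m ^ p := by
      rw [← Real.mul_rpow (by norm_num) hm0.le]
      exact Real.rpow_le_rpow_of_nonpos (by linarith) hm2 hp.le
    rw [show γ + 1 = p from rfl, le_div_iff_of_neg hp]
    have hq : (1 - (2:ℝ)^p) / (-p) * p = (2:ℝ)^p - 1 := by
      rw [div_mul_eq_mul_div, div_eq_iff (neg_ne_zero.mpr hp')]
      ring
    have hkey : (1 - (2:ℝ)^p) / (-p) * (2/s)^p * ε ^ p * p
        = ((2:ℝ)^p - 1) * ((2/s)^p * ε ^ p) := by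
      calc (1 - (2:ℝ)^p) / (-p) * (2/s)^p * ε ^ p * p
          = ((1 - (2:ℝ)^p) / (-p) * p) * ((2/s)^p * ε ^ p) := by ring
        _ = ((2:ℝ)^p - 1) * ((2/s)^p * ε ^ p) := by rw [hq]
    rw [hkey, ← hA]
    nlinarith [hB, hA, hεp, hC2, h2p]
end

section
/- Fix γ ∈ (−2, −1), Λ > 0, T > 0. Suppose (λ_s)_{s∈[0,T]} is a family of probability measures on [0,∞), and κ_T > 0 is such that for all sufficiently small ε > 0: ∫₀^T λ_s({1}) ds ≤ κ_T ε^{|γ|−1} + κ_T ε^{|γ|} ∫₀^T ∫₀^∞ |r²−1|^γ 1_{|r²−1| > ε} λ_s(dr) ds. Suppose further there exists g : [0,∞) → [0,∞) with g(x) → ∞ as x → ∞, x ↦ x g(1/x) non-decreasing, and M := ∫₀^T ∫₀^∞ g(1/|r²−1|) 1_{r ≠ 1} λ_s(dr) ds < ∞. Then ∫₀^T λ_s({1}) ds = 0. -/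
open MeasureTheory Filter Topology

/-!
For `ε < |r² - 1|` the monotonicity of `x ↦ x g(1/x)` gives
`ε^{|γ|} |r² - 1|^γ ≤ ε / |r² - 1| ≤ g(1/|r² - 1|) / g(1/ε)` (using `|γ| ≥ 1`), so the hypothesis
yields `∫₀^T λ_s({1}) ds ≤ κ ε^{|γ|-1} + κ M / g(1/ε)`. Both terms tend to `0` as `ε → 0⁺`,
since `|γ| > 1` and `g(1/ε) → ∞`.
-/

lemma rpow_neg_mul_rpow_le_div {ε y γ : ℝ} (hε : 0 < ε) (hεy : ε ≤ y) (hγ : γ ≤ -1) :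
    ε ^ (-γ) * y ^ γ ≤ ε / y := by
  have hy : 0 < y := hε.trans_le hεy
  calc ε ^ (-γ) * y ^ γ = (ε / y) ^ (-γ) := by
        rw [Real.div_rpow hε.le hy.le, Real.rpow_neg hy.le, div_eq_mul_inv, inv_inv]
    _ ≤ ε / y :=
      Real.rpow_le_self_of_le_one (div_pos hε hy).le ((div_le_one hy).2 hεy) (by linarith)

lemma rpow_neg_mul_rpow_le_div_of_monotoneOn {g : ℝ → ℝ}
    (hg : MonotoneOn (fun x => x * g (1 / x)) (Set.Ioi 0)) {ε y γ : ℝ} (hε : 0 < ε) (hεy : ε ≤ y)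
    (hγ : γ ≤ -1) (hgε : 0 < g (1 / ε)) :
    ε ^ (-γ) * y ^ γ ≤ g (1 / y) / g (1 / ε) := by
  have hy : 0 < y := hε.trans_le hεy
  refine (rpow_neg_mul_rpow_le_div hε hεy hγ).trans ?_
  rw [div_le_div_iff₀ hy hgε, mul_comm (g _)]
  exact hg hε hy hεy

lemma ofReal_mul_setLIntegral_rpow_le {α : Type*} [MeasurableSpace α] (μ : Measure α)
    {f : α → ℝ} (hf : Measurable f) {t : Set α} {g : ℝ → ℝ}
    (hg : MonotoneOn (fun x => x * g (1 / x)) (Set.Ioi 0)) {ε γ κ : ℝ} (hε : 0 < ε)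
    (hγ : γ ≤ -1) (hκ : 0 ≤ κ) (hgε : 0 < g (1 / ε)) (ht : {x | ε < f x} ⊆ t) :
    ENNReal.ofReal (κ * ε ^ (-γ)) * ∫⁻ x in {x | ε < f x}, ENNReal.ofReal (f x ^ γ) ∂μ ≤
      ENNReal.ofReal (κ / g (1 / ε)) * ∫⁻ x in t, ENNReal.ofReal (g (1 / f x)) ∂μ := by
  rw [← lintegral_const_mul' _ _ ENNReal.ofReal_ne_top,
    ← lintegral_const_mul' _ _ ENNReal.ofReal_ne_top]
  refine (setLIntegral_mono' (measurableSet_lt measurable_const hf) fun x hx => ?_).trans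
    (lintegral_mono_set ht)
  have hfx : ε < f x := hx
  rw [← ENNReal.ofReal_mul (by positivity), ← ENNReal.ofReal_mul (by positivity)]
  refine ENNReal.ofReal_le_ofReal ?_
  calc κ * ε ^ (-γ) * f x ^ γ = κ * (ε ^ (-γ) * f x ^ γ) := mul_assoc _ _ _
    _ ≤ κ * (g (1 / f x) / g (1 / ε)) := mul_le_mul_of_nonneg_left
        (rpow_neg_mul_rpow_le_div_of_monotoneOn hg hε hfx.le hγ hgε) hκ
    _ = κ / g (1 / ε) * g (1 / f x) := by ring

lemma tendsto_ofReal_const_mul_rpow_nhdsGT_zero (κ : ℝ) {p : ℝ} (hp : 0 < p) :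
    Tendsto (fun ε : ℝ => ENNReal.ofReal (κ * ε ^ p)) (𝓝[>] 0) (𝓝 0) := by
  have h : Tendsto (fun ε : ℝ => ε ^ p) (𝓝 0) (𝓝 0) := by
    simpa [Real.zero_rpow hp.ne'] using
      (Real.continuousAt_rpow_const 0 p (Or.inr hp.le)).tendsto
  simpa using ENNReal.tendsto_ofReal ((h.mono_left nhdsWithin_le_nhds).const_mul κ)

theorem stmt11_general (γ T κ : ℝ) (hγ : γ ∈ Set.Ioo (-2:ℝ) (-1)) (hκ : 0 < κ)
    (lam : ℝ → Measure ℝ) (g : ℝ → ℝ) (hgtop : Tendsto g atTop atTop)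
    (hgmono : ∀ x y : ℝ, 0 < x → x ≤ y → x * g (1/x) ≤ y * g (1/y))
    (hM : ∫⁻ s in Set.Icc (0:ℝ) T, ∫⁻ r in {r : ℝ | r ≠ 1},
        ENNReal.ofReal (g (1 / |r^2 - 1|)) ∂(lam s) < ⊤)
    (ε₀ : ℝ) (hε₀ : 0 < ε₀)
    (hmain : ∀ ε : ℝ, 0 < ε → ε < ε₀ →
      ∫⁻ s in Set.Icc (0:ℝ) T, (lam s) {1} ≤
        ENNReal.ofReal (κ * ε ^ (|γ| - 1)) +
        ENNReal.ofReal (κ * ε ^ |γ|) *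
          ∫⁻ s in Set.Icc (0:ℝ) T, ∫⁻ r in {r : ℝ | ε < |r^2 - 1|},
            ENNReal.ofReal (|r^2 - 1| ^ γ) ∂(lam s)) :
    ∫⁻ s in Set.Icc (0:ℝ) T, (lam s) {1} = 0 := by
  set M := ∫⁻ s in Set.Icc (0:ℝ) T, ∫⁻ r in {r : ℝ | r ≠ 1},
      ENNReal.ofReal (g (1 / |r^2 - 1|)) ∂(lam s)
  have habsγ : |γ| = -γ := abs_of_neg (hγ.2.trans (by norm_num))
  have hg : MonotoneOn (fun x => x * g (1 / x)) (Set.Ioi 0) :=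
    fun x hx y _ hxy => hgmono x y hx hxy
  have hgε : Tendsto (fun ε : ℝ => g (1 / ε)) (𝓝[>] 0) atTop :=
    hgtop.comp (tendsto_inv_nhdsGT_zero.congr fun x => (one_div x).symm)
  have hbound : ∀ᶠ ε in 𝓝[>] (0:ℝ), ∫⁻ s in Set.Icc (0:ℝ) T, (lam s) {1} ≤
      ENNReal.ofReal (κ * ε ^ (|γ| - 1)) + ENNReal.ofReal (κ / g (1 / ε)) * M := by
    filter_upwards [self_mem_nhdsWithin, nhdsWithin_le_nhds (Iio_mem_nhds hε₀),
      hgε.eventually_gt_atTop 0] with ε hε hεε₀ hgε_pos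
    refine (hmain ε hε hεε₀).trans (add_le_add_right ?_ _)
    rw [habsγ, ← lintegral_const_mul' _ _ ENNReal.ofReal_ne_top,
      ← lintegral_const_mul' _ _ ENNReal.ofReal_ne_top]
    refine lintegral_mono fun s => ofReal_mul_setLIntegral_rpow_le (lam s)
      (by fun_prop) hg hε hγ.2.le hκ.le hgε_pos fun r hr hr1 => ?_
    norm_num [hr1] at hr
    exact lt_asymm hr hε
  have hlim : Tendsto (fun ε : ℝ => ENNReal.ofReal (κ * ε ^ (|γ| - 1)) +
      ENNReal.ofReal (κ / g (1 / ε)) * M) (𝓝[>] 0) (𝓝 0) := by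
    have h₁ := tendsto_ofReal_const_mul_rpow_nhdsGT_zero κ (p := |γ| - 1) (by linarith [hγ.2])
    have h₂ : Tendsto (fun ε : ℝ => ENNReal.ofReal (κ / g (1 / ε)) * M) (𝓝[>] 0) (𝓝 0) := by
      simpa using ENNReal.Tendsto.mul_const
        (ENNReal.tendsto_ofReal (tendsto_const_nhds.div_atTop hgε)) (Or.inr hM.ne)
    simpa using h₁.add h₂
  exact le_zero_iff.mp (ge_of_tendsto hlim hbound)

/-- If `∫₀^T λ_s({1}) ds ≤ κ ε^{|γ|-1} + κ ε^{|γ|} ∫₀^T ∫ |r²-1|^γ 1_{|r²-1|>ε} dλ_s ds`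
for all small `ε`, and there is `g → ∞` with `x ↦ x g(1/x)` nondecreasing and
`∫₀^T ∫_{r≠1} g(1/|r²-1|) dλ_s ds < ∞`, then `∫₀^T λ_s({1}) ds = 0`. -/
theorem stmt11 (γ Λ T κ : ℝ) (hγ : γ ∈ Set.Ioo (-2:ℝ) (-1)) (hΛ : 0 < Λ)
    (hT : 0 < T) (hκ : 0 < κ)
    (lam : ℝ → Measure ℝ) (hprob : ∀ s, IsProbabilityMeasure (lam s))
    (g : ℝ → ℝ) (hg0 : ∀ x, 0 ≤ g x)
    (hgtop : Tendsto g atTop atTop)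
    (hgmono : ∀ x y : ℝ, 0 < x → x ≤ y → x * g (1/x) ≤ y * g (1/y))
    (hM : ∫⁻ s in Set.Icc (0:ℝ) T, ∫⁻ r in {r : ℝ | r ≠ 1},
        ENNReal.ofReal (g (1 / |r^2 - 1|)) ∂(lam s) < ⊤)
    (ε₀ : ℝ) (hε₀ : 0 < ε₀)
    (hmain : ∀ ε : ℝ, 0 < ε → ε < ε₀ →
      ∫⁻ s in Set.Icc (0:ℝ) T, (lam s) {1} ≤
        ENNReal.ofReal (κ * ε ^ (|γ| - 1)) +
        ENNReal.ofReal (κ * ε ^ |γ|) *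
          ∫⁻ s in Set.Icc (0:ℝ) T, ∫⁻ r in {r : ℝ | ε < |r^2 - 1|},
            ENNReal.ofReal (|r^2 - 1| ^ γ) ∂(lam s)) :
    ∫⁻ s in Set.Icc (0:ℝ) T, (lam s) {1} = 0 :=
  stmt11_general γ T κ hγ hκ lam g hgtop hgmono hM ε₀ hε₀ hmain
end

section
/- Let f₀ be the uniform probability measure on the unit circle in ℝ² and let γ ∈ (−2, −1). Then for every v ∈ ℝ² with |v| = 1, ∫_{ℝ²} |v − v_*|^γ 1_{v_* ≠ v} f₀(dv_*) = +∞. -/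
/-!
Parametrize the circle by `α ↦ exp (α i)` on `(-π, π]` and write `v = exp (α₀ i)` with
`α₀ = arg v`. Since the parametrization is `1`-Lipschitz, `|v - exp (α i)| ≤ α₀ - α` for
`α < α₀`, and as `γ < 0` the integrand dominates `(α₀ - α) ^ γ` on `(-π, α₀)`. That
one-sided singularity is not integrable because `γ ≤ -1`.
-/

open MeasureTheory Set Complex

lemma lintegral_Ioo_rpow_eq_top {γ : ℝ} (hγ : γ ≤ -1) {δ : ℝ} (hδ : 0 < δ) :
    ∫⁻ t in Ioo 0 δ, ENNReal.ofReal (t ^ γ) = ⊤ := by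
  by_contra h
  have hint : IntegrableOn (fun t : ℝ => t ^ γ) (Ioo 0 δ) :=
    (lintegral_ofReal_ne_top_iff_integrable (by fun_prop)
      (ae_restrict_of_forall_mem measurableSet_Ioo fun t ht => Real.rpow_nonneg ht.1.le γ)).1 h
  rw [intervalIntegral.integrableOn_Ioo_rpow_iff hδ] at hint
  linarith

lemma lintegral_Ioo_sub_rpow_eq_top {γ : ℝ} (hγ : γ ≤ -1) {a b : ℝ} (hab : a < b) :
    ∫⁻ t in Ioo a b, ENNReal.ofReal ((b - t) ^ γ) = ⊤ := by
  have hpre : (fun t : ℝ => b - t) ⁻¹' Ioo 0 (b - a) = Ioo a b := by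
    ext t
    simp only [mem_preimage, mem_Ioo]
    constructor <;> rintro ⟨h₁, h₂⟩ <;> constructor <;> linarith
  rw [← hpre, (Measure.measurePreserving_sub_left volume b).setLIntegral_comp_preimage_emb
    (Homeomorph.subLeft b).measurableEmbedding (fun t => ENNReal.ofReal (t ^ γ))]
  exact lintegral_Ioo_rpow_eq_top hγ (sub_pos.2 hab)

lemma norm_exp_mul_I_sub_exp_mul_I_le (a b : ℝ) :
    ‖exp (a * I) - exp (b * I)‖ ≤ |a - b| := by
  simpa [circleMap, dist_eq_norm, Real.dist_eq] using (lipschitzWith_circleMap 0 1).dist_le_mul a b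

lemma exp_mul_I_ne_of_lt {α β : ℝ} (hα : -Real.pi < α) (hαβ : α < β) (hβ : β ≤ Real.pi) :
    exp (α * I) ≠ exp (β * I) := by
  intro h
  have harg := congrArg arg h
  rw [arg_exp_mul_I, arg_exp_mul_I, (toIocMod_eq_self _).2 ⟨hα, by linarith⟩,
    (toIocMod_eq_self _).2 ⟨by linarith, by linarith⟩] at harg
  exact hαβ.ne harg

lemma setLIntegral_circle_norm_sub_rpow_eq_top {γ : ℝ} (hγ : γ ≤ -1) {v : ℂ} (hv : ‖v‖ = 1) :
    ∫⁻ α in (fun α : ℝ => exp (α * I)) ⁻¹' {w | w ≠ v} ∩ Ioc (-Real.pi) Real.pi,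
      ENNReal.ofReal (‖v - exp (α * I)‖ ^ γ) = ⊤ := by
  set α₀ := arg v
  have hv_exp : exp (α₀ * I) = v := by
    simpa [hv] using norm_mul_exp_arg_mul_I v
  have hsub : Ioo (-Real.pi) α₀ ⊆
      (fun α : ℝ => exp (α * I)) ⁻¹' {w | w ≠ v} ∩ Ioc (-Real.pi) Real.pi := by
    intro α hα
    refine ⟨?_, hα.1, hα.2.le.trans (arg_le_pi v)⟩
    rw [← hv_exp]
    exact exp_mul_I_ne_of_lt hα.1 hα.2 (arg_le_pi v)
  rw [eq_top_iff, ← lintegral_Ioo_sub_rpow_eq_top hγ (neg_pi_lt_arg v)]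
  refine le_trans (setLIntegral_mono' measurableSet_Ioo fun α hα => ?_) (lintegral_mono_set hsub)
  have hne : exp (α * I) ≠ v := (hsub hα).1
  have hdist : ‖v - exp (α * I)‖ ≤ α₀ - α := by
    rw [← hv_exp]
    exact (norm_exp_mul_I_sub_exp_mul_I_le α₀ α).trans_eq (abs_of_pos (sub_pos.2 hα.2))
  exact ENNReal.ofReal_le_ofReal <| Real.rpow_le_rpow_of_nonpos
    (norm_pos_iff.2 (sub_ne_zero.2 hne.symm)) hdist (by linarith)

/-- For `f₀` the uniform probability measure on the unit circle and
`γ ∈ (-2,-1)`, for every `v` on the circle, `∫ |v - v_*|^γ 1_{v_* ≠ v} f₀(dv_*) = ∞`. -/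
theorem stmt13 (γ : ℝ) (hγ : γ ∈ Set.Ioo (-2:ℝ) (-1))
    (f₀ : Measure ℂ)
    (hf₀ : f₀ = (ENNReal.ofReal (2 * Real.pi))⁻¹ •
      Measure.map (fun α : ℝ => Complex.exp (α * Complex.I))
        (volume.restrict (Set.Ioc (-Real.pi) Real.pi)))
    (v : ℂ) (hv : ‖v‖ = 1) :
    ∫⁻ w in {w : ℂ | w ≠ v}, ENNReal.ofReal (‖v - w‖ ^ γ) ∂f₀ = ⊤ := by
  have he : Measurable fun α : ℝ => exp (α * I) := by fun_prop
  have hne : MeasurableSet {w : ℂ | w ≠ v} := (measurableSet_singleton v).compl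
  rw [hf₀, Measure.restrict_smul, lintegral_smul_measure, Measure.restrict_map he hne,
    lintegral_map (by fun_prop) he, Measure.restrict_restrict (he hne),
    setLIntegral_circle_norm_sub_rpow_eq_top hγ.2.le hv, smul_eq_mul, ENNReal.mul_top]
  simp [ENNReal.mul_eq_top]
end

section
/- Let γ ∈ (−2, −1), f₀ the uniform probability measure on the unit circle, and for n ≥ 1 let K_n(v, v_*) = min(|v−v_*|^γ, n). Then sup_{v ∈ ℝ²} ∫_{ℝ²} (|v−v_*|^γ − K_n(v,v_*)) · |v−v_*| · 1_{v_* ≠ v} f₀(dv_*) ≤ C n^{(2+γ)/(2γ)} for some constant C depending only on γ, and in particular this supremum tends to 0 as n → ∞. -/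
/-!
For `v = |v| e^{iθ}`, the truncation error satisfies
`(|v-w|^γ - min(|v-w|^γ, n)) |v-w| ≤ n^{(2+γ)/(2γ)} |v-w|^{γ/2}`, so it suffices to bound
`∫ |v - e^{iα}|^{γ/2} dα` uniformly in `v`. Rotating by `e^{-iθ}` and taking imaginary parts gives
`|v - e^{iα}| ≥ |sin(α - θ)|`; by periodicity the integral of `|sin(α - θ)|^{γ/2}` does not depend
on `θ`, and it is finite because `|sin x| ≥ 2|x|/π` near `0` and `γ/2 > -1`.
Powers are taken in `ℝ≥0∞`, where `0 ^ q = ∞` for `q < 0`, so these bounds hold everywhere.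
-/

open MeasureTheory Filter Real Set Function
open scoped ENNReal

theorem Function.Periodic.setLIntegral_Ioc_add_eq {f : ℝ → ℝ≥0∞} {T : ℝ} (hf : Periodic f T)
    (hT : 0 < T) (t s : ℝ) :
    ∫⁻ x in Ioc t (t + T), f x = ∫⁻ x in Ioc s (s + T), f x :=
  (isAddFundamentalDomain_Ioc hT t).setLIntegral_eq (isAddFundamentalDomain_Ioc hT s) f
    fun ⟨_, k, rfl⟩ x => by simpa [add_comm] using (hf.zsmul k) x

theorem Function.Periodic.setLIntegral_Ioc_comp_sub {f : ℝ → ℝ≥0∞} {T : ℝ} (hf : Periodic f T)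
    (hT : 0 < T) (t c : ℝ) :
    ∫⁻ x in Ioc t (t + T), f (x - c) = ∫⁻ x in Ioc t (t + T), f x := by
  have hfc : Periodic (fun x => f (x - c)) T := fun x => by
    simpa [sub_add_eq_add_sub] using hf (x - c)
  rw [hfc.setLIntegral_Ioc_add_eq hT t (t + c), add_right_comm, ← preimage_sub_const_Ioc]
  exact (measurePreserving_sub_right volume c).setLIntegral_comp_preimage_emb
    (measurableEmbedding_subRight c) f _

theorem ENNReal.rpow_le_rpow_of_nonpos {x y : ℝ≥0∞} {z : ℝ} (hz : z ≤ 0) (hxy : x ≤ y) :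
    y ^ z ≤ x ^ z := by
  rw [← neg_neg z, ENNReal.rpow_neg y, ENNReal.rpow_neg x]
  exact ENNReal.inv_le_inv.2 (ENNReal.rpow_le_rpow hxy (neg_nonneg.2 hz))

theorem setLIntegral_ball_enorm_rpow_lt_top {E : Type*} [NormedAddCommGroup E] [NormedSpace ℝ E]
    [FiniteDimensional ℝ E] [MeasurableSpace E] [BorelSpace E] (μ : Measure E)
    [μ.IsAddHaarMeasure] (hE : 1 ≤ Module.finrank ℝ E) {q : ℝ} (hq : -(Module.finrank ℝ E : ℝ) < q)
    (r : ℝ) : ∫⁻ x in Metric.ball 0 r, ‖x‖ₑ ^ q ∂μ < ⊤ := by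
  have : Nontrivial E := Module.nontrivial_of_finrank_pos (R := ℝ) (by omega)
  have hint : IntegrableOn (fun x : E => ‖x‖ ^ q) (Metric.ball 0 r) μ :=
    integrableOn_ball_of_norm_le_rpow (C := 1) (α := -q) hE (by linarith)
      (ae_of_all _ fun x => by simp [abs_of_nonneg (Real.rpow_nonneg (norm_nonneg x) q)])
      (continuous_norm.measurable.pow_const q).aestronglyMeasurable
  refine lt_of_eq_of_lt (lintegral_congr_ae ?_) hint.2
  filter_upwards [ae_restrict_of_ae (μ.ae_ne 0)] with x hx
  rw [Real.enorm_of_nonneg (Real.rpow_nonneg (norm_nonneg x) q), ← ofReal_norm,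
    ENNReal.ofReal_rpow_of_pos (norm_pos_iff.2 hx)]

theorem Complex.abs_sin_sub_arg_le_norm_sub_exp (v : ℂ) (α : ℝ) :
    |Real.sin (α - v.arg)| ≤ ‖v - exp (α * I)‖ := by
  have hrot : exp (-(v.arg * I)) * (v - exp (α * I)) = ‖v‖ - exp ((α - v.arg : ℝ) * I) := by
    nth_rw 2 [← norm_mul_exp_arg_mul_I v]
    rw [mul_sub, mul_left_comm, ← exp_add, ← exp_add, neg_add_cancel, exp_zero, mul_one]
    push_cast; ring_nf
  calc |Real.sin (α - v.arg)| = |(exp (-(v.arg * I)) * (v - exp (α * I))).im| := by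
        rw [hrot, sub_im, exp_ofReal_mul_I_im]; simp
    _ ≤ ‖exp (-(v.arg * I)) * (v - exp (α * I))‖ := abs_im_le_norm _
    _ = ‖v - exp (α * I)‖ := by
        rw [norm_mul, ← neg_mul, ← ofReal_neg, norm_exp_ofReal_mul_I, one_mul]

theorem setLIntegral_enorm_sin_rpow_lt_top {q : ℝ} (hq : -1 < q) (hq0 : q ≤ 0) :
    ∫⁻ x in Ioc (-π) π, ‖sin x‖ₑ ^ q < ⊤ := by
  have hjordan : ∀ x ∈ Ioc (-(π / 2)) (π / 2), ‖sin x‖ₑ ^ q ≤ ‖2 / π‖ₑ ^ q * ‖x‖ₑ ^ q := by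
    intro x hx
    rw [← ENNReal.mul_rpow_of_ne_top enorm_ne_top enorm_ne_top, ← enorm_mul]
    refine ENNReal.rpow_le_rpow_of_nonpos hq0 (enorm_le_iff_norm_le.2 ?_)
    rw [Real.norm_eq_abs, Real.norm_eq_abs, abs_mul, abs_of_pos (by positivity : 0 < 2 / π)]
    exact mul_abs_le_abs_sin (abs_le.2 ⟨hx.1.le, hx.2⟩)
  have hc : ‖2 / π‖ₑ ^ q ≠ ⊤ :=
    ENNReal.rpow_ne_top_of_nonneg' (enorm_pos.2 (by positivity)) enorm_ne_top
  have hhalf : ∫⁻ x in Ioc (-(π / 2)) (π / 2), ‖sin x‖ₑ ^ q < ⊤ :=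
    calc ∫⁻ x in Ioc (-(π / 2)) (π / 2), ‖sin x‖ₑ ^ q
        ≤ ∫⁻ x in Metric.ball (0 : ℝ) π, ‖2 / π‖ₑ ^ q * ‖x‖ₑ ^ q := by
          refine (setLIntegral_mono' measurableSet_Ioc hjordan).trans (lintegral_mono_set ?_)
          intro x hx
          rw [Metric.mem_ball, dist_zero_right, Real.norm_eq_abs, abs_lt]
          constructor <;> linarith [hx.1, hx.2, pi_pos]
      _ = ‖2 / π‖ₑ ^ q * ∫⁻ x in Metric.ball (0 : ℝ) π, ‖x‖ₑ ^ q :=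
          lintegral_const_mul' _ _ hc
      _ < ⊤ := ENNReal.mul_lt_top hc.lt_top (setLIntegral_ball_enorm_rpow_lt_top volume (by simp)
          (by simpa using hq) π)
  have hper : Periodic (fun x => ‖sin x‖ₑ ^ q) π := fun x => by simp [sin_add_pi]
  have hleft := hper.setLIntegral_Ioc_add_eq pi_pos (-π) (-(π / 2))
  have hright := hper.setLIntegral_Ioc_add_eq pi_pos 0 (-(π / 2))
  rw [neg_add_cancel, show -(π / 2) + π = π / 2 by ring] at hleft
  rw [zero_add, show -(π / 2) + π = π / 2 by ring] at hright
  rw [← Ioc_union_Ioc_eq_Ioc (neg_nonpos.2 pi_pos.le) pi_pos.le,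
    lintegral_union measurableSet_Ioc (Ioc_disjoint_Ioc_of_le le_rfl), hleft, hright]
  exact ENNReal.add_lt_top.2 ⟨hhalf, hhalf⟩

theorem Complex.setLIntegral_enorm_sub_exp_rpow_le {q : ℝ} (hq : q ≤ 0) (v : ℂ) :
    ∫⁻ α in Ioc (-π) π, ‖v - exp (α * I)‖ₑ ^ q ≤ ∫⁻ α in Ioc (-π) π, ‖Real.sin α‖ₑ ^ q := by
  have hper : Periodic (fun x => ‖Real.sin x‖ₑ ^ q) (2 * π) := fun x => by
    simp [Real.sin_add_two_pi]
  calc ∫⁻ α in Ioc (-π) π, ‖v - exp (α * I)‖ₑ ^ q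
      ≤ ∫⁻ α in Ioc (-π) π, ‖Real.sin (α - v.arg)‖ₑ ^ q :=
        lintegral_mono fun α => ENNReal.rpow_le_rpow_of_nonpos hq
          (enorm_le_iff_norm_le.2 (by simpa using abs_sin_sub_arg_le_norm_sub_exp v α))
    _ = ∫⁻ α in Ioc (-π) π, ‖Real.sin α‖ₑ ^ q := by
        simpa [show -π + 2 * π = π by ring] using
          hper.setLIntegral_Ioc_comp_sub two_pi_pos (-π) v.arg

noncomputable def circleUniform : Measure ℂ :=
  (ENNReal.ofReal (2 * π))⁻¹ •
    Measure.map (fun α : ℝ => Complex.exp (α * Complex.I)) (volume.restrict (Ioc (-π) π))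

theorem lintegral_enorm_sub_rpow_circleUniform_le {q : ℝ} (hq : q ≤ 0) (v : ℂ) :
    ∫⁻ w, ‖v - w‖ₑ ^ q ∂circleUniform
      ≤ (ENNReal.ofReal (2 * π))⁻¹ * ∫⁻ α in Ioc (-π) π, ‖sin α‖ₑ ^ q := by
  rw [circleUniform, lintegral_smul_measure, smul_eq_mul]
  gcongr
  exact (lintegral_map_le _ _).trans (Complex.setLIntegral_enorm_sub_exp_rpow_le hq v)

theorem sub_min_rpow_mul_le {γ n r : ℝ} (hγ : -2 ≤ γ) (hγ0 : γ < 0) (hn : 0 < n) (hr : 0 < r) :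
    (r ^ γ - min (r ^ γ) n) * r ≤ n ^ ((2 + γ) / (2 * γ)) * r ^ (γ / 2) := by
  rcases le_total (r ^ γ) n with h | h
  · rw [min_eq_left h, sub_self, zero_mul]
    positivity
  rw [min_eq_right h]
  have hpow : r ^ (1 + γ / 2) ≤ n ^ ((2 + γ) / (2 * γ)) :=
    calc r ^ (1 + γ / 2) = (r ^ γ) ^ ((2 + γ) / (2 * γ)) := by
          rw [← rpow_mul hr.le]; congr 1; field_simp [hγ0.ne]
      _ ≤ n ^ ((2 + γ) / (2 * γ)) :=
          rpow_le_rpow_of_nonpos hn h (div_nonpos_of_nonneg_of_nonpos (by linarith) (by linarith))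
  calc (r ^ γ - n) * r ≤ r ^ γ * r := by gcongr; linarith
    _ = r ^ (γ / 2) * r ^ (1 + γ / 2) := by
        rw [← rpow_add_one hr.ne', ← rpow_add hr]; ring_nf
    _ ≤ r ^ (γ / 2) * n ^ ((2 + γ) / (2 * γ)) := by gcongr
    _ = n ^ ((2 + γ) / (2 * γ)) * r ^ (γ / 2) := mul_comm _ _

theorem ofReal_sub_min_rpow_mul_le {E : Type*} [NormedAddCommGroup E] {γ n : ℝ} (hγ : -2 ≤ γ)
    (hγ0 : γ < 0) (hn : 0 < n) (x : E) :
    ENNReal.ofReal ((‖x‖ ^ γ - min (‖x‖ ^ γ) n) * ‖x‖)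
      ≤ ENNReal.ofReal (n ^ ((2 + γ) / (2 * γ))) * ‖x‖ₑ ^ (γ / 2) := by
  rcases eq_or_ne x 0 with rfl | hx
  · simp
  have hpos : 0 < ‖x‖ := norm_pos_iff.2 hx
  rw [← ofReal_norm, ENNReal.ofReal_rpow_of_pos hpos, ← ENNReal.ofReal_mul (by positivity)]
  exact ENNReal.ofReal_le_ofReal (sub_min_rpow_mul_le hγ hγ0 hn hpos)

theorem setLIntegral_truncation_circleUniform_le {γ n : ℝ} (hγ : -2 ≤ γ) (hγ0 : γ < 0)
    (hn : 0 < n) (v : ℂ) (s : Set ℂ) :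
    ∫⁻ w in s, ENNReal.ofReal ((‖v - w‖ ^ γ - min (‖v - w‖ ^ γ) n) * ‖v - w‖) ∂circleUniform
      ≤ ENNReal.ofReal (n ^ ((2 + γ) / (2 * γ))) *
          ((ENNReal.ofReal (2 * π))⁻¹ * ∫⁻ α in Ioc (-π) π, ‖sin α‖ₑ ^ (γ / 2)) :=
  calc _ ≤ ∫⁻ w, ENNReal.ofReal (n ^ ((2 + γ) / (2 * γ))) * ‖v - w‖ₑ ^ (γ / 2) ∂circleUniform :=
        (setLIntegral_le_lintegral _ _).trans <| lintegral_mono fun w =>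
          ofReal_sub_min_rpow_mul_le hγ hγ0 hn _
    _ = _ * ∫⁻ w, ‖v - w‖ₑ ^ (γ / 2) ∂circleUniform :=
        lintegral_const_mul' _ _ ENNReal.ofReal_ne_top
    _ ≤ _ := by gcongr; exact lintegral_enorm_sub_rpow_circleUniform_le (by linarith) v

/-- Cutoff approximation: with `K_n = min(|v-v_*|^γ, n)`,
`sup_v ∫ (|v-v_*|^γ - K_n) |v-v_*| 1_{v_*≠v} f₀(dv_*) ≤ C n^{(2+γ)/(2γ)} → 0`. -/
theorem stmt15 (γ : ℝ) (hγ : γ ∈ Set.Ioo (-2:ℝ) (-1))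
    (f₀ : Measure ℂ)
    (hf₀ : f₀ = (ENNReal.ofReal (2 * Real.pi))⁻¹ •
      Measure.map (fun α : ℝ => Complex.exp (α * Complex.I))
        (volume.restrict (Set.Ioc (-Real.pi) Real.pi))) :
    ∃ C : ℝ, 0 < C ∧
      (∀ n : ℕ, 1 ≤ n → ∀ v : ℂ,
        ∫⁻ w in {w : ℂ | w ≠ v},
            ENNReal.ofReal ((‖v - w‖ ^ γ - min (‖v - w‖ ^ γ) (n : ℝ)) * ‖v - w‖) ∂f₀
          ≤ ENNReal.ofReal (C * (n : ℝ) ^ ((2 + γ)/(2*γ)))) ∧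
      Tendsto (fun n : ℕ => ⨆ v : ℂ,
          ∫⁻ w in {w : ℂ | w ≠ v},
            ENNReal.ofReal ((‖v - w‖ ^ γ - min (‖v - w‖ ^ γ) (n : ℝ)) * ‖v - w‖) ∂f₀)
        atTop (nhds 0) := by
  obtain ⟨hγ2, hγ1⟩ := hγ
  change f₀ = circleUniform at hf₀
  subst hf₀
  have key (n : ℕ) (hn : 1 ≤ n) (v : ℂ) := setLIntegral_truncation_circleUniform_le (by linarith)
    (by linarith) (by exact_mod_cast hn : (0 : ℝ) < n) v {w | w ≠ v}
  set M := (ENNReal.ofReal (2 * π))⁻¹ * ∫⁻ α in Ioc (-π) π, ‖sin α‖ₑ ^ (γ / 2)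
  have hM : M ≠ ⊤ := ENNReal.mul_ne_top (by simp [pi_pos])
    (setLIntegral_enorm_sin_rpow_lt_top (by linarith) (by linarith)).ne
  refine ⟨M.toReal + 1, by positivity, fun n hn v => (key n hn v).trans ?_, ?_⟩
  · rw [ENNReal.ofReal_mul (by positivity), mul_comm]
    gcongr
    exact (ENNReal.le_ofReal_iff_toReal_le hM (by positivity)).2 (by linarith)
  · have hexp : 0 < -((2 + γ) / (2 * γ)) := neg_pos.2 (div_neg_of_pos_of_neg (by linarith)
      (by linarith))
    have hrpow : Tendsto (fun n : ℕ => ENNReal.ofReal ((n : ℝ) ^ ((2 + γ) / (2 * γ)))) atTop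
        (nhds 0) := by
      simpa using ENNReal.tendsto_ofReal
        ((tendsto_rpow_neg_atTop hexp).comp tendsto_natCast_atTop_atTop)
    refine tendsto_of_tendsto_of_tendsto_of_le_of_le' tendsto_const_nhds
      (by simpa using ENNReal.Tendsto.mul_const hrpow (Or.inr hM)) (.of_forall fun _ => zero_le)
      ((eventually_ge_atTop 1).mono fun n hn => iSup_le (key n hn))
end
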